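/- For every n ≥ 1: (i) the matrix A_n⁰ is symmetric positive definite, its eigenvalues are exactly the zeros of P_{n+1}^(0)(·;ζ) together with the zeros of P_n^(1)(·;ζ), and in particular every eigenvalue of A_n⁰ is strictly greater than 1; and (ii) for every u ∈ (−1,1), with γ := (1−u²)^{−1/2}, the symmetric matrix γ·(A_n⁰ − u·A_n¹) is positive definite. -/

import Mathlib

open MeasureTheory Polynomial

noncomputable def besselK (n : ℕ) (ζ : ℝ) : ℝ :=
  ∫ t in Set.Ioi (0 : ℝ), Real.cosh ((n : ℝ) * t) * Real.exp (-ζ * Real.cosh t)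

noncomputable def Gfun (ζ : ℝ) : ℝ := besselK 2 ζ / besselK 1 ζ

noncomputable def wgt (ℓ : ℕ) (ζ x : ℝ) : ℝ :=
  (x ^ 2 - 1) ^ ((ℓ : ℝ) - 1 / 2) * Real.exp (-ζ * x) / besselK 1 ζ

noncomputable def jacobiSq (a b : ℕ → ℝ) (n : ℕ) :
    Matrix (Fin (n + 1)) (Fin (n + 1)) ℝ :=
  fun i j =>
    if (i : ℕ) = (j : ℕ) then b (i : ℕ)
    else if (i : ℕ) + 1 = (j : ℕ) ∨ (j : ℕ) + 1 = (i : ℕ) then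
      a (min (i : ℕ) (j : ℕ))
    else 0

noncomputable def jacobiRect (p q r : ℕ → ℝ) (n : ℕ) :
    Matrix (Fin (n + 1)) (Fin (n + 2)) ℝ :=
  fun i j =>
    if (j : ℕ) = (i : ℕ) then p (i : ℕ)
    else if (j : ℕ) = (i : ℕ) + 1 then q (i : ℕ)
    else if (j : ℕ) = (i : ℕ) + 2 then r ((i : ℕ) + 1)
    else 0

/-!
Identify `v : Fin (N + 2) ⊕ Fin (N + 1) → ℝ` with the pair of polynomials
`F = ∑ᵢ v (inl i) • P⁰ᵢ`, `G = ∑ⱼ v (inr j) • P¹ⱼ`. Since `ω¹ = (x² - 1) ω⁰`, every entry of `A⁰`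
and `A¹` is a moment of `ω⁰`, and
`v ⬝ (A⁰ - u A¹) v = ∫ (x F² + (x² - 1) x G² - 2u (x² - 1) F G) ω⁰`. For `x > 1` and `|u| < 1`
the integrand is a positive definite quadratic form in `(F(x), G(x))`.

A Jacobi block `J` is the matrix of `V ↦ X V` on polynomials of degree `≤ n`, compressed by
orthogonal projection. So `J w = μ w` with `V = ∑ wᵢ • Pᵢ ≠ 0` says that `(X - μ) V` is orthogonal
to `P₀, …, Pₙ`, i.e. is a nonzero multiple of `Pₙ₊₁`, and this happens iff `Pₙ₊₁(μ) = 0`. As the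
zeros of the `Pₙ` lie in `(1, ∞)`, so do the eigenvalues.
-/

open Matrix

theorem exists_sum_smul_eq_of_natDegree_eq {K : Type*} [Field K] {P : ℕ → K[X]}
    (hdeg : ∀ n, (P n).natDegree = n) (hne : ∀ n, P n ≠ 0) {f : K[X]} {n : ℕ}
    (hf : f.natDegree ≤ n) : ∃ c : Fin (n + 1) → K, ∑ i, c i • P i = f := by
  let S : Polynomial.Sequence K := ⟨P, fun n => by rw [degree_eq_natDegree (hne n), hdeg]⟩
  have hmem : f ∈ Submodule.span K (S '' Set.Iic n) := by
    rw [S.span_degreeLE fun i _ => (leadingCoeff_ne_zero.2 (hne i)).isUnit]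
    exact mem_degreeLE.2 (degree_le_of_natDegree_le hf)
  have hrange : S '' Set.Iic n = Set.range fun i : Fin (n + 1) => P i := by
    ext g
    simp only [Set.mem_image, Set.mem_Iic, Set.mem_range]
    exact ⟨fun ⟨i, hi, h⟩ => ⟨⟨i, by omega⟩, h⟩, fun ⟨i, h⟩ => ⟨i, by omega, h⟩⟩
  rw [hrange] at hmem
  exact (Submodule.mem_span_range_iff_exists_fun K).1 hmem

theorem lt_of_eval_C_mul_prod_eq_zero {ι : Type*} {a c μ : ℝ} (hc : c ≠ 0) {s : Finset ι}
    {z : ι → ℝ} (hz : ∀ i ∈ s, a < z i) (h : (C c * ∏ i ∈ s, (X - C (z i))).eval μ = 0) :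
    a < μ := by
  simp only [eval_mul, eval_C, eval_prod, eval_sub, eval_X, mul_eq_zero, hc, false_or,
    Finset.prod_eq_zero_iff, sub_eq_zero] at h
  obtain ⟨i, hi, rfl⟩ := h
  exact hz i hi

structure IsOrthonormalPolySeq (M : ℝ[X] →ₗ[ℝ] ℝ) (P : ℕ → ℝ[X]) : Prop where
  natDegree_eq : ∀ n, (P n).natDegree = n
  moment_mul : ∀ m n, M (P m * P n) = if m = n then 1 else 0

namespace IsOrthonormalPolySeq

variable {M : ℝ[X] →ₗ[ℝ] ℝ} {P : ℕ → ℝ[X]}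

theorem ne_zero (hP : IsOrthonormalPolySeq M P) (n : ℕ) : P n ≠ 0 := by
  intro h
  simpa [h] using hP.moment_mul n n

theorem coeff_self (hP : IsOrthonormalPolySeq M P) (n : ℕ) :
    (P n).coeff n = (P n).leadingCoeff := by
  rw [leadingCoeff, hP.natDegree_eq]

theorem exists_sum_smul_eq (hP : IsOrthonormalPolySeq M P) {f : ℝ[X]} {n : ℕ}
    (hf : f.natDegree ≤ n) : ∃ c : Fin (n + 1) → ℝ, ∑ i, c i • P i = f :=
  exists_sum_smul_eq_of_natDegree_eq hP.natDegree_eq hP.ne_zero hf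

theorem moment_sum_smul_mul (hP : IsOrthonormalPolySeq M P) {m : ℕ} (c : Fin m → ℝ)
    (j : Fin m) : M ((∑ i, c i • P i) * P j) = c j := by
  simp only [Finset.sum_mul, map_sum, smul_mul_assoc, map_smul, hP.moment_mul, Fin.val_inj,
    smul_eq_mul, mul_ite, mul_one, mul_zero, Finset.sum_ite_eq', Finset.mem_univ, if_true]

theorem sum_smul_eq_zero_iff (hP : IsOrthonormalPolySeq M P) {m : ℕ} (c : Fin m → ℝ) :
    ∑ i, c i • P i = 0 ↔ c = 0 := by
  refine ⟨fun h => funext fun j => ?_, fun h => by simp [h]⟩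
  rw [← hP.moment_sum_smul_mul c j, h, zero_mul, map_zero, Pi.zero_apply]

theorem sum_moment_mul_smul (hP : IsOrthonormalPolySeq M P) {f : ℝ[X]} {n : ℕ}
    (hf : f.natDegree ≤ n) : ∑ i : Fin (n + 1), M (f * P i) • P i = f := by
  obtain ⟨c, rfl⟩ := hP.exists_sum_smul_eq hf
  simp_rw [hP.moment_sum_smul_mul]

theorem moment_mul_eq_coeff_div (hP : IsOrthonormalPolySeq M P) {g : ℝ[X]} {m : ℕ}
    (hg : g.natDegree ≤ m) : M (g * P m) = g.coeff m / (P m).leadingCoeff := by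
  obtain ⟨c, rfl⟩ := hP.exists_sum_smul_eq hg
  have hlow : ∀ i : Fin m, (P i).coeff m = 0 := fun i =>
    coeff_eq_zero_of_natDegree_lt (by rw [hP.natDegree_eq]; exact i.isLt)
  have hcoeff : (∑ i, c i • P i).coeff m = c (Fin.last m) * (P m).leadingCoeff := by
    simp [Fin.sum_univ_castSucc, hlow, hP.coeff_self]
  rw [hcoeff, mul_div_cancel_right₀ _ (leadingCoeff_ne_zero.2 (hP.ne_zero m))]
  simpa using hP.moment_sum_smul_mul c (Fin.last m)

theorem moment_mul_eq_zero (hP : IsOrthonormalPolySeq M P) {g : ℝ[X]} {m : ℕ}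
    (hg : g.natDegree < m) : M (g * P m) = 0 := by
  rw [hP.moment_mul_eq_coeff_div hg.le, coeff_eq_zero_of_natDegree_lt hg, zero_div]

theorem natDegree_X_mul (hP : IsOrthonormalPolySeq M P) (n : ℕ) :
    (X * P n).natDegree = n + 1 := by
  rw [Polynomial.natDegree_X_mul (hP.ne_zero n), hP.natDegree_eq]

theorem moment_X_mul_mul_succ (hP : IsOrthonormalPolySeq M P) (n : ℕ) :
    M (X * P n * P (n + 1)) = (P n).leadingCoeff / (P (n + 1)).leadingCoeff := by
  rw [hP.moment_mul_eq_coeff_div (hP.natDegree_X_mul n).le, coeff_X_mul, hP.coeff_self]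

theorem moment_X_mul_mul_of_succ_lt (hP : IsOrthonormalPolySeq M P) {m n : ℕ}
    (h : m + 1 < n) : M (X * P m * P n) = 0 :=
  hP.moment_mul_eq_zero (by rw [hP.natDegree_X_mul]; exact h)

theorem jacobiSq_apply (hP : IsOrthonormalPolySeq M P) {a b : ℕ → ℝ}
    (ha : ∀ n, a n = (P n).leadingCoeff / (P (n + 1)).leadingCoeff)
    (hb : ∀ n, b n = M (X * P n * P n)) {n : ℕ} (i j : Fin (n + 1)) :
    jacobiSq a b n i j = M (X * P i * P j) := by
  have hswap : M (X * P j * P i) = M (X * P i * P j) := by rw [mul_right_comm]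
  unfold jacobiSq
  split_ifs with hij hadj
  · rw [hb, hij]
  · rcases hadj with h | h
    · rw [← h, min_eq_left (by omega), ha, hP.moment_X_mul_mul_succ]
    · rw [← hswap, ← h, min_eq_right (by omega), ha, hP.moment_X_mul_mul_succ]
  · rcases lt_or_gt_of_ne hij with h | h
    · rw [hP.moment_X_mul_mul_of_succ_lt (by omega)]
    · rw [← hswap, hP.moment_X_mul_mul_of_succ_lt (by omega)]

end IsOrthonormalPolySeq

section GramMatrix

variable {ι κ : Type*} [Fintype κ] {M : ℝ[X] →ₗ[ℝ] ℝ} {Q : ι → ℝ[X]} {R : κ → ℝ[X]}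
  {B : Matrix ι κ ℝ}

theorem mulVec_apply_of_eq_moment (hB : ∀ i j, B i j = M (Q i * R j)) (y : κ → ℝ) (i : ι) :
    (B *ᵥ y) i = M (Q i * ∑ j, y j • R j) := by
  simp only [mulVec, dotProduct, hB, Finset.mul_sum, mul_smul_comm, map_sum, map_smul,
    smul_eq_mul, mul_comm]

theorem dotProduct_mulVec_of_eq_moment [Fintype ι] (hB : ∀ i j, B i j = M (Q i * R j))
    (x : ι → ℝ) (y : κ → ℝ) :
    x ⬝ᵥ (B *ᵥ y) = M ((∑ i, x i • Q i) * ∑ j, y j • R j) := by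
  simp only [dotProduct, mulVec_apply_of_eq_moment hB, Finset.sum_mul, smul_mul_assoc, map_sum,
    map_smul, smul_eq_mul]

end GramMatrix

namespace IsOrthonormalPolySeq

variable {M : ℝ[X] →ₗ[ℝ] ℝ} {P : ℕ → ℝ[X]} {n : ℕ} {J : Matrix (Fin (n + 1)) (Fin (n + 1)) ℝ}

theorem mulVec_eq_smul_iff (hP : IsOrthonormalPolySeq M P)
    (hJ : ∀ i j, J i j = M (X * P i * P j)) (v : Fin (n + 1) → ℝ) (μ : ℝ) :
    J *ᵥ v = μ • v ↔ ∀ i : Fin (n + 1), M (P i * ((X - C μ) * ∑ j, v j • P j)) = 0 := by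
  have hrow (i : Fin (n + 1)) :
      M (P i * ((X - C μ) * ∑ j, v j • P j)) = (J *ᵥ v) i - μ * v i := by
    have hsplit : P i * ((X - C μ) * ∑ j, v j • P j)
        = X * P i * ∑ j, v j • P j - μ • ((∑ j, v j • P j) * P i) := by
      rw [smul_eq_C_mul]
      ring
    rw [hsplit, map_sub, map_smul, smul_eq_mul, hP.moment_sum_smul_mul,
      mulVec_apply_of_eq_moment (Q := fun i : Fin (n + 1) => X * P i) hJ]
  simp only [hrow, sub_eq_zero, funext_iff, Pi.smul_apply, smul_eq_mul]

theorem exists_mulVec_eq_smul_iff (hP : IsOrthonormalPolySeq M P)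
    (hJ : ∀ i j, J i j = M (X * P i * P j)) (μ : ℝ) :
    (∃ v, v ≠ 0 ∧ J *ᵥ v = μ • v) ↔ (P (n + 1)).eval μ = 0 := by
  constructor
  · rintro ⟨v, hv, hJv⟩
    set V := ∑ j, v j • P j
    have hH : (X - C μ) * V ≠ 0 :=
      mul_ne_zero (X_sub_C_ne_zero μ) fun h => hv ((hP.sum_smul_eq_zero_iff v).1 h)
    have hVdeg : V.natDegree ≤ n := natDegree_sum_le_of_forall_le _ _ fun j _ =>
      (natDegree_smul_le _ _).trans (by rw [hP.natDegree_eq]; omega)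
    have hdeg : ((X - C μ) * V).natDegree ≤ n + 1 :=
      natDegree_mul_le.trans (by rw [natDegree_X_sub_C]; omega)
    -- `(X - μ) V` is orthogonal to `P 0, …, P n`, hence a multiple of `P (n + 1)`
    have horth : ∀ i : Fin (n + 1), M (P i * ((X - C μ) * V)) = 0 :=
      (hP.mulVec_eq_smul_iff hJ v μ).1 hJv
    have hmultiple := hP.sum_moment_mul_smul hdeg
    rw [Fin.sum_univ_castSucc] at hmultiple
    simp only [Fin.val_castSucc, Fin.val_last, mul_comm _ (P _), horth, zero_smul,
      Finset.sum_const_zero, zero_add] at hmultiple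
    have hc : M (P (n + 1) * ((X - C μ) * V)) ≠ 0 := by
      intro h
      rw [h, zero_smul] at hmultiple
      exact hH hmultiple.symm
    have heval := congrArg (eval μ) hmultiple
    rw [eval_smul, eval_mul, eval_sub, eval_X, eval_C, sub_self, zero_mul, smul_eq_mul] at heval
    exact (mul_eq_zero.1 heval).resolve_left hc
  · intro hμ
    set V := P (n + 1) /ₘ (X - C μ)
    have hV : (X - C μ) * V = P (n + 1) := mul_divByMonic_eq_iff_isRoot.2 hμ
    have hdeg : V.natDegree ≤ n := by
      rw [natDegree_divByMonic _ (monic_X_sub_C μ), natDegree_X_sub_C, hP.natDegree_eq]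
      omega
    have hsum := hP.sum_moment_mul_smul hdeg
    refine ⟨fun i => M (V * P i), fun h => hP.ne_zero (n + 1) ?_, ?_⟩
    · rw [← hV, ← hsum, (hP.sum_smul_eq_zero_iff _).2 h, mul_zero]
    · refine (hP.mulVec_eq_smul_iff hJ _ μ).2 fun i => ?_
      rw [hsum, hV, hP.moment_mul, if_neg (by omega)]

end IsOrthonormalPolySeq

theorem jacobiRect_apply {M0 M1 : ℝ[X] →ₗ[ℝ] ℝ} {P0 P1 : ℕ → ℝ[X]}
    (hP0 : IsOrthonormalPolySeq M0 P0) (hP1 : IsOrthonormalPolySeq M1 P1)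
    (hM : ∀ f, M1 f = M0 ((X ^ 2 - 1) * f)) {p q r : ℕ → ℝ}
    (hp : ∀ n, p n = (P0 n).leadingCoeff / (P1 n).leadingCoeff)
    (hq : ∀ n, q n = M1 (P0 (n + 1) * P1 n))
    (hr : ∀ n, r (n + 1) = (P1 n).leadingCoeff / (P0 (n + 2)).leadingCoeff) (N : ℕ)
    (i : Fin (N + 1)) (j : Fin (N + 2)) :
    jacobiRect p q r N i j = M1 (P1 i * P0 j) := by
  have hdeg (k : ℕ) : ((X ^ 2 - 1 : ℝ[X]) * P1 k).natDegree ≤ k + 2 :=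
    natDegree_mul_le.trans (by rw [hP1.natDegree_eq, add_comm]; gcongr; compute_degree)
  have hcoeff (k : ℕ) : ((X ^ 2 - 1 : ℝ[X]) * P1 k).coeff (k + 2) = (P1 k).leadingCoeff := by
    rw [sub_mul, one_mul, coeff_sub, coeff_X_pow_mul, hP1.coeff_self,
      coeff_eq_zero_of_natDegree_lt (by rw [hP1.natDegree_eq]; omega), sub_zero]
  unfold jacobiRect
  split_ifs with h1 h2 h3
  · rw [hp, mul_comm, h1, hP1.moment_mul_eq_coeff_div (hP0.natDegree_eq _).le, hP0.coeff_self]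
  · rw [hq, h2, mul_comm]
  · rw [hr, hM, h3, ← mul_assoc, hP0.moment_mul_eq_coeff_div (hdeg _), hcoeff]
  · rcases lt_or_gt_of_ne h1 with h | h
    · rw [mul_comm, hP1.moment_mul_eq_zero (by rw [hP0.natDegree_eq]; exact h)]
    · rw [hM, ← mul_assoc, hP0.moment_mul_eq_zero ((hdeg _).trans_lt (by omega))]

section Blocks

variable {m n R : Type*} [Fintype m] [Fintype n] [CommRing R]

theorem exists_fromBlocks_mulVec_eq_smul_iff (A : Matrix m m R) (D : Matrix n n R) (μ : R) :
    (∃ v, v ≠ 0 ∧ fromBlocks A 0 0 D *ᵥ v = μ • v) ↔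
      (∃ x, x ≠ 0 ∧ A *ᵥ x = μ • x) ∨ ∃ y, y ≠ 0 ∧ D *ᵥ y = μ • y := by
  have key (v : m ⊕ n → R) : fromBlocks A 0 0 D *ᵥ v = μ • v ↔
      A *ᵥ (v ∘ Sum.inl) = μ • (v ∘ Sum.inl) ∧ D *ᵥ (v ∘ Sum.inr) = μ • (v ∘ Sum.inr) := by
    simp [fromBlocks_mulVec, funext_iff, Sum.forall]
  constructor
  · rintro ⟨v, hv, hAv⟩
    obtain ⟨hx, hy⟩ := (key v).1 hAv
    by_cases hx0 : v ∘ Sum.inl = 0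
    · refine Or.inr ⟨v ∘ Sum.inr, fun hy0 => hv ?_, hy⟩
      rw [← Sum.elim_comp_inl_inr v, hx0, hy0]
      exact Sum.elim_zero_zero
    · exact Or.inl ⟨_, hx0, hx⟩
  · rintro (⟨x, hx, hAx⟩ | ⟨y, hy, hDy⟩)
    · refine ⟨Sum.elim x 0, fun h => hx ?_, (key _).2 ⟨by simpa using hAx, by simp⟩⟩
      simpa using congrArg (· ∘ Sum.inl) h
    · refine ⟨Sum.elim 0 y, fun h => hy ?_, (key _).2 ⟨by simp, by simpa using hDy⟩⟩
      simpa using congrArg (· ∘ Sum.inr) h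

theorem dotProduct_fromBlocks_mulVec (A : Matrix m m R) (B : Matrix m n R) (B' : Matrix n m R)
    (D : Matrix n n R) (v : m ⊕ n → R) :
    v ⬝ᵥ (fromBlocks A B B' D *ᵥ v) =
      v ∘ Sum.inl ⬝ᵥ (A *ᵥ (v ∘ Sum.inl)) + v ∘ Sum.inl ⬝ᵥ (B *ᵥ (v ∘ Sum.inr)) +
        v ∘ Sum.inr ⬝ᵥ (B' *ᵥ (v ∘ Sum.inl)) + v ∘ Sum.inr ⬝ᵥ (D *ᵥ (v ∘ Sum.inr)) := by
  conv_lhs => rw [← Sum.elim_comp_inl_inr v, fromBlocks_mulVec, sumElim_dotProduct_sumElim]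
  simp only [Sum.elim_comp_inl, Sum.elim_comp_inr, dotProduct_add]
  ring

end Blocks

noncomputable def boostSymbol (u : ℝ) (F G : ℝ[X]) : ℝ[X] :=
  X * F ^ 2 + (X ^ 2 - 1) * X * G ^ 2 - 2 * C u * (X ^ 2 - 1) * F * G

theorem boost_quadratic_pos {x u f g : ℝ} (hx : 1 < x) (hu : u ^ 2 < 1) (hfg : f ≠ 0 ∨ g ≠ 0) :
    0 < x * f ^ 2 + (x ^ 2 - 1) * x * g ^ 2 - 2 * u * (x ^ 2 - 1) * f * g := by
  have ht : 0 < x ^ 2 - 1 := by nlinarith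
  rcases eq_or_ne g 0 with rfl | hg
  · have hf : f ≠ 0 := by simpa using hfg
    simpa using (show 0 < x * f ^ 2 by positivity)
  · have hc : 0 < x ^ 2 * (1 - u ^ 2) + u ^ 2 := by nlinarith
    have hsq : x * (x * f ^ 2 + (x ^ 2 - 1) * x * g ^ 2 - 2 * u * (x ^ 2 - 1) * f * g) =
        (x * f - u * (x ^ 2 - 1) * g) ^ 2 +
          (x ^ 2 - 1) * g ^ 2 * (x ^ 2 * (1 - u ^ 2) + u ^ 2) := by
      ring
    refine pos_of_mul_pos_right (a := x) ?_ (by linarith)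
    rw [hsq]
    positivity

theorem eval_boostSymbol (u x : ℝ) (F G : ℝ[X]) :
    (boostSymbol u F G).eval x = x * F.eval x ^ 2 + (x ^ 2 - 1) * x * G.eval x ^ 2 -
      2 * u * (x ^ 2 - 1) * F.eval x * G.eval x := by
  simp [boostSymbol]

theorem eval_boostSymbol_nonneg {u x : ℝ} (hu : u ^ 2 < 1) (hx : 1 < x) (F G : ℝ[X]) :
    0 ≤ (boostSymbol u F G).eval x := by
  rw [eval_boostSymbol]
  by_cases h : F.eval x = 0 ∧ G.eval x = 0
  · simp [h.1, h.2]
  · exact (boost_quadratic_pos hx hu (not_and_or.1 h)).le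

theorem exists_gt_eval_ne_zero {W : ℝ[X]} (hW : W ≠ 0) (a : ℝ) : ∃ x, a < x ∧ W.eval x ≠ 0 := by
  obtain ⟨x, hx, hroot⟩ := (Set.Ioi_infinite a).exists_notMem_finset W.roots.toFinset
  exact ⟨x, hx, by simpa [hW] using hroot⟩

theorem boostSymbol_ne_zero {u : ℝ} (hu : u ^ 2 < 1) {F G : ℝ[X]} (hFG : F ≠ 0 ∨ G ≠ 0) :
    boostSymbol u F G ≠ 0 := by
  obtain ⟨x, hx, hFGx⟩ : ∃ x, 1 < x ∧ (F.eval x ≠ 0 ∨ G.eval x ≠ 0) := by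
    rcases hFG with hF | hG
    · obtain ⟨x, hx, h⟩ := exists_gt_eval_ne_zero hF 1
      exact ⟨x, hx, Or.inl h⟩
    · obtain ⟨x, hx, h⟩ := exists_gt_eval_ne_zero hG 1
      exact ⟨x, hx, Or.inr h⟩
  intro h
  have := boost_quadratic_pos hx hu hFGx
  rw [← eval_boostSymbol, h, eval_zero] at this
  exact this.false

section BlockQuadraticForm

variable {m n : Type*} [Fintype m] [Fintype n] {M0 M1 : ℝ[X] →ₗ[ℝ] ℝ}
  {Q0 : m → ℝ[X]} {Q1 : n → ℝ[X]} {J0 : Matrix m m ℝ} {J1 : Matrix n n ℝ} {R : Matrix n m ℝ}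

theorem dotProduct_fromBlocks_sub_smul_mulVec (hM : ∀ f, M1 f = M0 ((X ^ 2 - 1) * f))
    (hJ0 : ∀ i j, J0 i j = M0 (X * Q0 i * Q0 j)) (hJ1 : ∀ i j, J1 i j = M1 (X * Q1 i * Q1 j))
    (hR : ∀ i j, R i j = M1 (Q1 i * Q0 j)) (u : ℝ) (v : m ⊕ n → ℝ) :
    v ⬝ᵥ ((fromBlocks J0 0 0 J1 - u • fromBlocks 0 Rᵀ R 0) *ᵥ v) =
      M0 (boostSymbol u (∑ i, v (Sum.inl i) • Q0 i) (∑ j, v (Sum.inr j) • Q1 j)) := by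
  set F := ∑ i, v (Sum.inl i) • Q0 i
  set G := ∑ j, v (Sum.inr j) • Q1 j
  have hRt : ∀ i j, Rᵀ i j = M1 (Q0 i * Q1 j) := fun i j => by
    rw [transpose_apply, hR, mul_comm]
  have hXF : ∑ i, v (Sum.inl i) • (X * Q0 i) = X * F := by
    simp only [F, Finset.mul_sum, mul_smul_comm]
  have hXG : ∑ j, v (Sum.inr j) • (X * Q1 j) = X * G := by
    simp only [G, Finset.mul_sum, mul_smul_comm]
  have hsymbol : boostSymbol u F G = X * F * F + (X ^ 2 - 1) * (X * G * G) -
      u • ((X ^ 2 - 1) * (F * G)) - u • ((X ^ 2 - 1) * (G * F)) := by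
    rw [boostSymbol, smul_eq_C_mul, smul_eq_C_mul]
    ring
  rw [sub_mulVec, dotProduct_sub, smul_mulVec, dotProduct_smul,
    dotProduct_fromBlocks_mulVec, dotProduct_fromBlocks_mulVec,
    dotProduct_mulVec_of_eq_moment (Q := fun i => X * Q0 i) hJ0,
    dotProduct_mulVec_of_eq_moment (Q := fun i => X * Q1 i) hJ1,
    dotProduct_mulVec_of_eq_moment hRt, dotProduct_mulVec_of_eq_moment hR]
  simp only [zero_mulVec, dotProduct_zero, add_zero, zero_add, Function.comp_apply, hXF, hXG, hM,
    hsymbol, map_sub, map_add, map_smul, smul_eq_mul]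
  ring

end BlockQuadraticForm

theorem posDef_fromBlocks_sub_smul {M0 M1 : ℝ[X] →ₗ[ℝ] ℝ} {P0 P1 : ℕ → ℝ[X]}
    (hP0 : IsOrthonormalPolySeq M0 P0) (hP1 : IsOrthonormalPolySeq M1 P1)
    (hM : ∀ f, M1 f = M0 ((X ^ 2 - 1) * f))
    (hM0 : ∀ H : ℝ[X], H ≠ 0 → (∀ x, 1 < x → 0 ≤ H.eval x) → 0 < M0 H) {m n : ℕ}
    {J0 : Matrix (Fin m) (Fin m) ℝ} {J1 : Matrix (Fin n) (Fin n) ℝ} {R : Matrix (Fin n) (Fin m) ℝ}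
    (hJ0 : ∀ i j, J0 i j = M0 (X * P0 i * P0 j)) (hJ1 : ∀ i j, J1 i j = M1 (X * P1 i * P1 j))
    (hR : ∀ i j, R i j = M1 (P1 i * P0 j)) {u : ℝ} (hu : u ^ 2 < 1) :
    (fromBlocks J0 0 0 J1 - u • fromBlocks 0 Rᵀ R 0).PosDef := by
  have hJ0h : J0.IsHermitian := IsHermitian.ext fun i j => by
    rw [star_trivial, hJ0, hJ0, mul_right_comm]
  have hJ1h : J1.IsHermitian := IsHermitian.ext fun i j => by
    rw [star_trivial, hJ1, hJ1, mul_right_comm]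
  have hA1h : (fromBlocks 0 Rᵀ R 0).IsHermitian :=
    IsHermitian.fromBlocks (by simp)
      (by rw [conjTranspose_eq_transpose_of_trivial, transpose_transpose]) (by simp)
  refine PosDef.of_dotProduct_mulVec_pos
    ((IsHermitian.fromBlocks hJ0h (by simp) hJ1h).sub (hA1h.smul (IsSelfAdjoint.all u)))
    fun v hv => ?_
  rw [star_trivial, dotProduct_fromBlocks_sub_smul_mulVec hM hJ0 hJ1 hR]
  have hFG : (∑ i, v (Sum.inl i) • P0 i) ≠ 0 ∨ (∑ j, v (Sum.inr j) • P1 j) ≠ 0 := by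
    by_contra! h
    refine hv (funext (Sum.rec (fun i => ?_) (fun j => ?_)))
    · exact congrFun ((hP0.sum_smul_eq_zero_iff _).1 h.1) i
    · exact congrFun ((hP1.sum_smul_eq_zero_iff _).1 h.2) j
  exact hM0 _ (boostSymbol_ne_zero hu hFG) fun x hx => eval_boostSymbol_nonneg hu hx _ _

theorem integral_pos_of_ae_pos {α : Type*} [MeasurableSpace α] {μ : Measure α} (hμ : μ ≠ 0)
    {f : α → ℝ} (hf : ∀ᵐ x ∂μ, 0 < f x) (hfi : Integrable f μ) : 0 < ∫ x, f x ∂μ := by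
  have hnn : 0 ≤ᵐ[μ] f := hf.mono fun _ h => h.le
  refine (integral_nonneg_of_ae hnn).lt_of_ne fun h => hμ ?_
  have h0 := (integral_eq_zero_iff_of_nonneg_ae hnn hfi).1 h.symm
  rw [← ae_eq_bot]
  exact Filter.eventually_false_iff_eq_bot.1 ((hf.and h0).mono fun x hx => hx.1.ne' hx.2)

theorem ae_eval_ne_zero {H : ℝ[X]} (hH : H ≠ 0) : ∀ᵐ x ∂(volume : Measure ℝ), H.eval x ≠ 0 := by
  rw [ae_iff]
  simpa using (finite_setOfPred_isRoot hH).measure_zero volume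

section MomentFunctional

variable {ν : Measure ℝ} {ρ : ℝ → ℝ}

theorem integrable_eval_mul_of_orthonormal (hρm : AEStronglyMeasurable ρ ν) (hρ : 0 ≤ᵐ[ν] ρ)
    {P : ℕ → ℝ[X]} (hdeg : ∀ n, (P n).natDegree = n)
    (horth : ∀ m n, ∫ x, (P m).eval x * (P n).eval x * ρ x ∂ν = if m = n then 1 else 0)
    (f : ℝ[X]) : Integrable (fun x => f.eval x * ρ x) ν := by
  have hne (n : ℕ) : P n ≠ 0 := fun h => by simpa [h] using horth n n
  have hsq (n : ℕ) : Integrable (fun x => (P n).eval x * (P n).eval x * ρ x) ν :=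
    Integrable.of_integral_ne_zero (by rw [horth, if_pos rfl]; exact one_ne_zero)
  have hmul (m n : ℕ) : Integrable (fun x => (P m).eval x * (P n).eval x * ρ x) ν := by
    refine ((hsq m).add (hsq n)).mono'
      (((P m).continuous.mul (P n).continuous).aestronglyMeasurable.mul hρm) ?_
    filter_upwards [hρ] with x hx
    rw [Pi.add_apply, Real.norm_eq_abs, abs_mul, abs_of_nonneg hx, ← add_mul]
    refine mul_le_mul_of_nonneg_right (abs_le.2 ⟨?_, ?_⟩) hx
    · nlinarith [sq_nonneg ((P m).eval x + (P n).eval x)]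
    · nlinarith [sq_nonneg ((P m).eval x - (P n).eval x)]
  -- `P 0` is a nonzero constant, so `P n * ρ` is a multiple of `P n * P 0 * ρ`
  obtain ⟨c, hc⟩ : ∃ c, P 0 = C c := ⟨_, eq_C_of_natDegree_eq_zero (hdeg 0)⟩
  have hc0 : c ≠ 0 := fun h => hne 0 (by rw [hc, h, C_0])
  have hlin (n : ℕ) : Integrable (fun x => (P n).eval x * ρ x) ν :=
    ((hmul n 0).const_mul c⁻¹).congr (ae_of_all _ fun x => by
      simp only [hc, eval_C]
      field_simp)
  obtain ⟨d, hd⟩ := exists_sum_smul_eq_of_natDegree_eq hdeg hne le_rfl (f := f)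
  rw [← hd]
  simp only [eval_finsetSum, eval_smul, smul_eq_mul, Finset.sum_mul, mul_assoc]
  exact integrable_finsetSum _ fun i _ => (hlin i).const_mul (d i)

noncomputable def momentFunctional (ν : Measure ℝ) (ρ : ℝ → ℝ)
    (hint : ∀ f : ℝ[X], Integrable (fun x => f.eval x * ρ x) ν) : ℝ[X] →ₗ[ℝ] ℝ where
  toFun f := ∫ x, f.eval x * ρ x ∂ν
  map_add' f g := by
    simp only [eval_add, add_mul]
    exact integral_add (hint f) (hint g)
  map_smul' c f := by
    simp only [eval_smul, smul_eq_mul, mul_assoc, RingHom.id_apply]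
    exact integral_const_mul c _

variable {hint : ∀ f : ℝ[X], Integrable (fun x => f.eval x * ρ x) ν}

theorem momentFunctional_apply (f : ℝ[X]) :
    momentFunctional ν ρ hint f = ∫ x, f.eval x * ρ x ∂ν := rfl

theorem momentFunctional_mul (f g : ℝ[X]) :
    momentFunctional ν ρ hint (f * g) = ∫ x, f.eval x * g.eval x * ρ x ∂ν := by
  simp only [momentFunctional_apply, eval_mul]

theorem momentFunctional_X_mul_mul_self (f : ℝ[X]) :
    momentFunctional ν ρ hint (X * f * f) = ∫ x, x * f.eval x ^ 2 * ρ x ∂ν := by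
  simp only [momentFunctional_apply, eval_mul, eval_X, sq, mul_assoc]

theorem isOrthonormalPolySeq_momentFunctional {P : ℕ → ℝ[X]}
    (hdeg : ∀ n, (P n).natDegree = n)
    (horth : ∀ m n, ∫ x, (P m).eval x * (P n).eval x * ρ x ∂ν = if m = n then 1 else 0) :
    IsOrthonormalPolySeq (momentFunctional ν ρ hint) P :=
  ⟨hdeg, fun m n => by rw [momentFunctional_mul, horth]⟩

end MomentFunctional

theorem momentFunctional_pos {ρ : ℝ → ℝ} {s : Set ℝ} (hs : MeasurableSet s) (hs0 : volume s ≠ 0)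
    (hρ : ∀ x ∈ s, 0 < ρ x)
    (hint : ∀ f : ℝ[X], Integrable (fun x => f.eval x * ρ x) (volume.restrict s))
    {H : ℝ[X]} (hH : H ≠ 0) (hnn : ∀ x ∈ s, 0 ≤ H.eval x) :
    0 < momentFunctional (volume.restrict s) ρ hint H := by
  refine integral_pos_of_ae_pos (by rwa [Ne, Measure.restrict_eq_zero]) ?_ (hint H)
  filter_upwards [ae_restrict_mem hs, ae_restrict_of_ae (ae_eval_ne_zero hH)] with x hx hHx
  exact mul_pos ((hnn x hx).lt_of_ne' hHx) (hρ x hx)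

theorem wgt_measurable (ℓ : ℕ) (ζ : ℝ) : Measurable (wgt ℓ ζ) := by
  unfold wgt
  fun_prop

theorem wgt_pos {ζ : ℝ} (hK : 0 < besselK 1 ζ) (ℓ : ℕ) {x : ℝ} (hx : 1 < x) : 0 < wgt ℓ ζ x := by
  have hx2 : 0 < x ^ 2 - 1 := by nlinarith
  exact div_pos (mul_pos (Real.rpow_pos_of_pos hx2 _) (Real.exp_pos _)) hK

theorem besselK_one_pos_of_integral_pos {ζ : ℝ} (ℓ : ℕ) {g : ℝ → ℝ} (hg : ∀ x, 0 ≤ g x)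
    (h : 0 < ∫ x in Set.Ioi 1, g x * wgt ℓ ζ x) : 0 < besselK 1 ζ := by
  by_contra! hK
  refine h.not_ge (setIntegral_nonpos measurableSet_Ioi fun x (hx : 1 < x) =>
    mul_nonpos_of_nonneg_of_nonpos (hg x) ?_)
  have hx2 : 0 < x ^ 2 - 1 := by nlinarith
  exact div_nonpos_of_nonneg_of_nonpos
    (mul_nonneg (Real.rpow_nonneg hx2.le _) (Real.exp_pos _).le) hK

theorem wgt_one_eq (ζ : ℝ) {x : ℝ} (hx : 1 < x) : wgt 1 ζ x = (x ^ 2 - 1) * wgt 0 ζ x := by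
  have hx2 : 0 < x ^ 2 - 1 := by nlinarith
  rw [wgt, wgt, show ((1 : ℕ) : ℝ) - 1 / 2 = 1 + ((0 : ℕ) - 1 / 2) by norm_num,
    Real.rpow_add hx2, Real.rpow_one]
  ring

theorem momentFunctional_wgt_one {ζ : ℝ}
    {hint0 : ∀ f : ℝ[X], Integrable (fun x => f.eval x * wgt 0 ζ x) (volume.restrict (Set.Ioi 1))}
    {hint1 : ∀ f : ℝ[X], Integrable (fun x => f.eval x * wgt 1 ζ x) (volume.restrict (Set.Ioi 1))}
    (f : ℝ[X]) :
    momentFunctional _ _ hint1 f = momentFunctional _ _ hint0 ((X ^ 2 - 1) * f) := by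
  refine setIntegral_congr_fun measurableSet_Ioi fun x (hx : 1 < x) => ?_
  simp only [eval_mul, eval_sub, eval_pow, eval_X, eval_one, wgt_one_eq ζ hx]
  ring

theorem stmt19_general
    (ζ : ℝ)
    (P0 P1 : ℕ → Polynomial ℝ) (lc0 lc1 : ℕ → ℝ)
    (hdeg0 : ∀ n, (P0 n).natDegree = n)
    (hdeg1 : ∀ n, (P1 n).natDegree = n)
    (hlc0 : ∀ n, (P0 n).leadingCoeff = lc0 n)
    (hlc1 : ∀ n, (P1 n).leadingCoeff = lc1 n)
    (horth0 : ∀ m n, (∫ x in Set.Ioi (1 : ℝ),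
        (P0 m).eval x * (P0 n).eval x * wgt 0 ζ x) = if m = n then (1 : ℝ) else 0)
    (horth1 : ∀ m n, (∫ x in Set.Ioi (1 : ℝ),
        (P1 m).eval x * (P1 n).eval x * wgt 1 ζ x) = if m = n then (1 : ℝ) else 0)
    (z0 z1 : ℕ → ℕ → ℝ)
    (hzfac0 : ∀ n, P0 n = C (lc0 n) * ∏ i ∈ Finset.Icc 1 n, (X - C (z0 n i)))
    (hzfac1 : ∀ n, P1 n = C (lc1 n) * ∏ i ∈ Finset.Icc 1 n, (X - C (z1 n i)))
    (hzgt0 : ∀ n i, 1 ≤ i → i ≤ n → 1 < z0 n i)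
    (hzgt1 : ∀ n i, 1 ≤ i → i ≤ n → 1 < z1 n i)
    (a0 a1 b0 b1 p q r : ℕ → ℝ)
    (ha0 : ∀ n, a0 n = lc0 n / lc0 (n + 1))
    (ha1 : ∀ n, a1 n = lc1 n / lc1 (n + 1))
    (hb0 : ∀ n, b0 n = ∫ x in Set.Ioi (1 : ℝ), x * ((P0 n).eval x) ^ 2 * wgt 0 ζ x)
    (hb1 : ∀ n, b1 n = ∫ x in Set.Ioi (1 : ℝ), x * ((P1 n).eval x) ^ 2 * wgt 1 ζ x)
    (hp : ∀ n, p n = lc0 n / lc1 n)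
    (hr : ∀ n, r (n + 1) = lc1 n / lc0 (n + 2))
    (hq : ∀ n, q n = ∫ x in Set.Ioi (1 : ℝ),
        (P0 (n + 1)).eval x * (P1 n).eval x * wgt 1 ζ x)
    (N : ℕ)
    (A0 A1 : Matrix (Fin (N + 2) ⊕ Fin (N + 1)) (Fin (N + 2) ⊕ Fin (N + 1)) ℝ)
    (hA0 : A0 = Matrix.fromBlocks (jacobiSq a0 b0 (N + 1)) 0 0 (jacobiSq a1 b1 N))
    (hA1 : A1 = Matrix.fromBlocks 0 (jacobiRect p q r N).transpose (jacobiRect p q r N) 0) :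
    A0.PosDef ∧
    (∀ μ : ℝ, (∃ v : Fin (N + 2) ⊕ Fin (N + 1) → ℝ,
        v ≠ 0 ∧ A0.mulVec v = μ • v) ↔
      ((P0 (N + 2)).eval μ = 0 ∨ (P1 (N + 1)).eval μ = 0)) ∧
    (∀ μ : ℝ, (∃ v : Fin (N + 2) ⊕ Fin (N + 1) → ℝ,
        v ≠ 0 ∧ A0.mulVec v = μ • v) → 1 < μ) ∧
    (∀ u : ℝ, -1 < u → u < 1 →
      (((1 - u ^ 2) ^ (-(1 / 2) : ℝ)) • (A0 - u • A1)).PosDef) := by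
  have hK : 0 < besselK 1 ζ := besselK_one_pos_of_integral_pos 0
    (fun x => mul_self_nonneg ((P0 0).eval x)) (by rw [horth0, if_pos rfl]; exact one_pos)
  have hwgt (ℓ : ℕ) : 0 ≤ᵐ[volume.restrict (Set.Ioi 1)] wgt ℓ ζ :=
    (ae_restrict_mem measurableSet_Ioi).mono fun x hx => (wgt_pos hK ℓ hx).le
  have hint0 := integrable_eval_mul_of_orthonormal
    (wgt_measurable 0 ζ).aestronglyMeasurable (hwgt 0) hdeg0 horth0
  have hint1 := integrable_eval_mul_of_orthonormal
    (wgt_measurable 1 ζ).aestronglyMeasurable (hwgt 1) hdeg1 horth1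
  set M0 := momentFunctional _ _ hint0
  set M1 := momentFunctional _ _ hint1
  have hP0 : IsOrthonormalPolySeq M0 P0 := isOrthonormalPolySeq_momentFunctional hdeg0 horth0
  have hP1 : IsOrthonormalPolySeq M1 P1 := isOrthonormalPolySeq_momentFunctional hdeg1 horth1
  have hM : ∀ f, M1 f = M0 ((X ^ 2 - 1) * f) := momentFunctional_wgt_one
  have hJ0 := hP0.jacobiSq_apply (a := a0) (b := b0) (n := N + 1)
    (fun n => by rw [ha0, hlc0, hlc0]) (fun n => by rw [hb0, momentFunctional_X_mul_mul_self])
  have hJ1 := hP1.jacobiSq_apply (a := a1) (b := b1) (n := N)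
    (fun n => by rw [ha1, hlc1, hlc1]) (fun n => by rw [hb1, momentFunctional_X_mul_mul_self])
  have hR := jacobiRect_apply hP0 hP1 hM (p := p) (q := q) (r := r)
    (fun n => by rw [hp, hlc0, hlc1]) (fun n => by rw [hq, momentFunctional_mul])
    (fun n => by rw [hr, hlc0, hlc1]) N
  have hpos (u : ℝ) (hu1 : -1 < u) (hu2 : u < 1) : (A0 - u • A1).PosDef := by
    rw [hA0, hA1]
    exact posDef_fromBlocks_sub_smul hP0 hP1 hM
      (fun H hH hnn => momentFunctional_pos measurableSet_Ioi (by simp)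
        (fun x hx => wgt_pos hK 0 hx) hint0 hH hnn) hJ0 hJ1 hR (by nlinarith)
  have heig (μ : ℝ) : (∃ v, v ≠ 0 ∧ A0 *ᵥ v = μ • v) ↔
      (P0 (N + 2)).eval μ = 0 ∨ (P1 (N + 1)).eval μ = 0 := by
    rw [hA0, exists_fromBlocks_mulVec_eq_smul_iff, hP0.exists_mulVec_eq_smul_iff hJ0,
      hP1.exists_mulVec_eq_smul_iff hJ1]
  refine ⟨by simpa using hpos 0 (by norm_num) (by norm_num), heig, fun μ hμ => ?_,
    fun u hu1 hu2 => (hpos u hu1 hu2).smul (Real.rpow_pos_of_pos (by nlinarith) _)⟩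
  rcases (heig μ).1 hμ with h | h
  · rw [hzfac0] at h
    exact lt_of_eval_C_mul_prod_eq_zero (hlc0 _ ▸ leadingCoeff_ne_zero.2 (hP0.ne_zero _))
      (fun i hi => hzgt0 _ _ (Finset.mem_Icc.1 hi).1 (Finset.mem_Icc.1 hi).2) h
  · rw [hzfac1] at h
    exact lt_of_eval_C_mul_prod_eq_zero (hlc1 _ ▸ leadingCoeff_ne_zero.2 (hP1.ne_zero _))
      (fun i hi => hzgt1 _ _ (Finset.mem_Icc.1 hi).1 (Finset.mem_Icc.1 hi).2) h

theorem stmt19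
    (ζ : ℝ) (hζ : 0 < ζ)
    (P0 P1 : ℕ → Polynomial ℝ) (lc0 lc1 : ℕ → ℝ)
    (hdeg0 : ∀ n, (P0 n).natDegree = n)
    (hdeg1 : ∀ n, (P1 n).natDegree = n)
    (hlc0 : ∀ n, (P0 n).leadingCoeff = lc0 n)
    (hlc1 : ∀ n, (P1 n).leadingCoeff = lc1 n)
    (hlc0pos : ∀ n, 0 < lc0 n)
    (hlc1pos : ∀ n, 0 < lc1 n)
    (horth0 : ∀ m n, (∫ x in Set.Ioi (1 : ℝ),
        (P0 m).eval x * (P0 n).eval x * wgt 0 ζ x) = if m = n then (1 : ℝ) else 0)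
    (horth1 : ∀ m n, (∫ x in Set.Ioi (1 : ℝ),
        (P1 m).eval x * (P1 n).eval x * wgt 1 ζ x) = if m = n then (1 : ℝ) else 0)
    (z0 z1 : ℕ → ℕ → ℝ)
    (hzfac0 : ∀ n, P0 n = C (lc0 n) * ∏ i ∈ Finset.Icc 1 n, (X - C (z0 n i)))
    (hzfac1 : ∀ n, P1 n = C (lc1 n) * ∏ i ∈ Finset.Icc 1 n, (X - C (z1 n i)))
    (hzgt0 : ∀ n i, 1 ≤ i → i ≤ n → 1 < z0 n i)
    (hzgt1 : ∀ n i, 1 ≤ i → i ≤ n → 1 < z1 n i)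
    (hzmono0 : ∀ n i j, 1 ≤ i → i < j → j ≤ n → z0 n i < z0 n j)
    (hzmono1 : ∀ n i j, 1 ≤ i → i < j → j ≤ n → z1 n i < z1 n j)
    (a0 a1 b0 b1 p q r : ℕ → ℝ)
    (ha0 : ∀ n, a0 n = lc0 n / lc0 (n + 1))
    (ha1 : ∀ n, a1 n = lc1 n / lc1 (n + 1))
    (hb0 : ∀ n, b0 n = ∫ x in Set.Ioi (1 : ℝ), x * ((P0 n).eval x) ^ 2 * wgt 0 ζ x)
    (hb1 : ∀ n, b1 n = ∫ x in Set.Ioi (1 : ℝ), x * ((P1 n).eval x) ^ 2 * wgt 1 ζ x)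
    (hp : ∀ n, p n = lc0 n / lc1 n)
    (hr : ∀ n, r (n + 1) = lc1 n / lc0 (n + 2))
    (hq : ∀ n, q n = ∫ x in Set.Ioi (1 : ℝ),
        (P0 (n + 1)).eval x * (P1 n).eval x * wgt 1 ζ x)
    (N : ℕ)
    (A0 A1 : Matrix (Fin (N + 2) ⊕ Fin (N + 1)) (Fin (N + 2) ⊕ Fin (N + 1)) ℝ)
    (hA0 : A0 = Matrix.fromBlocks (jacobiSq a0 b0 (N + 1)) 0 0 (jacobiSq a1 b1 N))
    (hA1 : A1 = Matrix.fromBlocks 0 (jacobiRect p q r N).transpose (jacobiRect p q r N) 0) :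
    A0.PosDef ∧
    (∀ μ : ℝ, (∃ v : Fin (N + 2) ⊕ Fin (N + 1) → ℝ,
        v ≠ 0 ∧ A0.mulVec v = μ • v) ↔
      ((P0 (N + 2)).eval μ = 0 ∨ (P1 (N + 1)).eval μ = 0)) ∧
    (∀ μ : ℝ, (∃ v : Fin (N + 2) ⊕ Fin (N + 1) → ℝ,
        v ≠ 0 ∧ A0.mulVec v = μ • v) → 1 < μ) ∧
    (∀ u : ℝ, -1 < u → u < 1 →
      (((1 - u ^ 2) ^ (-(1 / 2) : ℝ)) • (A0 - u • A1)).PosDef) :=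
  stmt19_general ζ P0 P1 lc0 lc1 hdeg0 hdeg1 hlc0 hlc1 horth0 horth1 z0 z1 hzfac0 hzfac1 hzgt0 hzgt1
    a0 a1 b0 b1 p q r ha0 ha1 hb0 hb1 hp hr hq N A0 A1 hA0 hA1
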